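/- arXiv:1909.05276 — 10 statements merged into one kernel-verified Lean document; each statement's English description precedes it below -/
import Mathlib

section
/- Let m ≥ 2 and n ≥ 1, and let f : E^m → E^n be a function. If 0 is a limit point of the set P_f of distances preserved by f (i.e. for every ε > 0 there exists r ∈ P_f with 0 < r < ε), then f is differentiable at every point and its Fréchet derivative at every point is a linear isometric embedding, i.e. ‖(Df_x)(v)‖ = ‖v‖ for every x ∈ E^m and v ∈ ℝ^m. (This is the Euclidean-space instance of the Immersion Theorem.) -/
/-!
Two points at distance `≤ 2r` have a common point at distance `r` from both, because spheres in
dimension `≥ 2` are connected; so a map preserving `r` sends `2r`-close points to `2r`-close points,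
and chaining along a segment gives `dist (f x) (f y) ≤ dist x y + 2r`. As `r` can be taken
arbitrarily small, `f` is `1`-Lipschitz. A `1`-Lipschitz map preserving `r` preserves every
distance `≤ r`: prolong the segment `xy` to length `r` and use the triangle inequality. Then along
a subdivision of any segment into steps of length `≤ r / 2`, strict convexity makes each image
point the midpoint of its neighbours, so the images are equally spaced on a line and `f` is an
isometry. By Mazur–Ulam it is affine, and its derivative is its linear part.
-/

open Metric AffineMap Finset

def PreservesDist {X Y : Type*} [PseudoMetricSpace X] [PseudoMetricSpace Y] (f : X → Y)
    (r : ℝ) : Prop :=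
  ∀ x y, dist x y = r → dist (f x) (f y) = r

section

variable {E F Y : Type*} [NormedAddCommGroup E] [NormedSpace ℝ E]
  [NormedAddCommGroup F] [NormedSpace ℝ F] [PseudoMetricSpace Y]

theorem dist_lineMap_div_lineMap_add_div (x y : E) (k i j : ℕ) :
    dist (lineMap x y ((i : ℝ) / k)) (lineMap x y (((i + j : ℕ) : ℝ) / k)) =
      j * dist x y / k := by
  rw [dist_lineMap_lineMap, Real.dist_eq, Nat.cast_add, add_div, sub_add_cancel_left, abs_neg,
    abs_of_nonneg (by positivity)]
  ring

theorem exists_dist_eq_dist_eq_of_dist_le (hE : 1 < Module.rank ℝ E) {a b : E} {r : ℝ}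
    (hr : 0 ≤ r) (hab : dist a b ≤ 2 * r) : ∃ c, dist a c = r ∧ dist b c = r := by
  rcases eq_or_ne a b with rfl | hne
  · obtain ⟨c, hc⟩ := (isConnected_sphere hE a hr).nonempty
    rw [mem_sphere'] at hc
    exact ⟨c, hc, hc⟩
  have hd : 0 < dist a b := dist_pos.2 hne
  -- the two points of the line `ab` on `sphere a r` are at distances `|dist a b - r| ≤ r` and
  -- `dist a b + r ≥ r` from `b`, and the sphere is connected
  have h₁ : lineMap a b (r / dist a b) ∈ sphere a r := by
    rw [mem_sphere, dist_lineMap_left, Real.norm_of_nonneg (by positivity),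
      div_mul_cancel₀ _ hd.ne']
  have h₂ : lineMap a b (-(r / dist a b)) ∈ sphere a r := by
    rw [mem_sphere, dist_lineMap_left, norm_neg, Real.norm_of_nonneg (by positivity),
      div_mul_cancel₀ _ hd.ne']
  have hle₁ : dist b (lineMap a b (r / dist a b)) ≤ r := by
    rw [dist_comm, dist_lineMap_right, Real.norm_eq_abs, ← abs_of_pos hd, ← abs_mul,
      abs_of_pos hd, sub_mul, div_mul_cancel₀ _ hd.ne', one_mul, abs_le]
    constructor <;> linarith
  have hle₂ : r ≤ dist b (lineMap a b (-(r / dist a b))) := by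
    rw [dist_comm, dist_lineMap_right, sub_neg_eq_add, Real.norm_of_nonneg (by positivity),
      add_mul, div_mul_cancel₀ _ hd.ne', one_mul]
    linarith
  obtain ⟨c, hc, hbc⟩ := (isPreconnected_sphere hE a r).intermediate_value h₁ h₂
    (continuous_const.dist continuous_id).continuousOn ⟨hle₁, hle₂⟩
  exact ⟨c, mem_sphere'.1 hc, hbc⟩

theorem PreservesDist.dist_le_two_mul (hE : 1 < Module.rank ℝ E) {f : E → Y} {r : ℝ}
    (hf : PreservesDist f r) (hr : 0 ≤ r) {x y : E} (hxy : dist x y ≤ 2 * r) :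
    dist (f x) (f y) ≤ 2 * r := by
  obtain ⟨c, hxc, hyc⟩ := exists_dist_eq_dist_eq_of_dist_le hE hr hxy
  calc dist (f x) (f y) ≤ dist (f x) (f c) + dist (f y) (f c) := dist_triangle_right _ _ _
    _ = 2 * r := by rw [hf x c hxc, hf y c hyc]; ring

theorem dist_le_add_of_forall_dist_le {f : E → Y} {δ : ℝ} (hδ : 0 < δ)
    (hf : ∀ x y, dist x y ≤ δ → dist (f x) (f y) ≤ δ) (x y : E) :
    dist (f x) (f y) ≤ dist x y + δ := by
  obtain ⟨k, hk, hk'⟩ : ∃ k : ℕ, dist x y / δ ≤ k ∧ (k : ℝ) < dist x y / δ + 1 :=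
    ⟨_, Nat.le_ceil _, Nat.ceil_lt_add_one (by positivity)⟩
  rw [div_le_iff₀ hδ] at hk
  replace hk' : k * δ < dist x y + δ := by
    simpa [add_mul, div_mul_cancel₀ _ hδ.ne'] using mul_lt_mul_of_pos_right hk' hδ
  rcases k.eq_zero_or_pos with rfl | hk₀
  · obtain rfl : x = y := dist_le_zero.1 (by simpa using hk)
    simp [hδ.le]
  set p : ℕ → E := fun i => lineMap x y ((i : ℝ) / k)
  have hp : ∀ i, dist (p i) (p (i + 1)) ≤ δ := fun i => by
    rw [dist_lineMap_div_lineMap_add_div, Nat.cast_one, one_mul, div_le_iff₀ (by positivity)]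
    linarith
  calc dist (f x) (f y) = dist (f (p 0)) (f (p k)) := by
        simp [p, div_self (Nat.cast_ne_zero.2 hk₀.ne' : (k : ℝ) ≠ 0)]
    _ ≤ ∑ i ∈ range k, dist (f (p i)) (f (p (i + 1))) := dist_le_range_sum_dist (f ∘ p) k
    _ ≤ ∑ _i ∈ range k, δ := sum_le_sum fun i _ => hf _ _ (hp i)
    _ = k * δ := by simp
    _ ≤ dist x y + δ := by linarith

theorem lipschitzWith_one_of_forall_exists_preservesDist (hE : 1 < Module.rank ℝ E)
    {f : E → Y} (hf : ∀ ε > 0, ∃ r, 0 < r ∧ r < ε ∧ PreservesDist f r) : LipschitzWith 1 f :=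
  LipschitzWith.of_dist_le_mul fun x y => by
    rw [NNReal.coe_one, one_mul]
    refine le_of_forall_pos_lt_add fun ε hε => ?_
    obtain ⟨r, hr, hrε, hfr⟩ := hf (ε / 2) (half_pos hε)
    calc dist (f x) (f y) ≤ dist x y + 2 * r :=
          dist_le_add_of_forall_dist_le (by linarith) (fun _ _ => hfr.dist_le_two_mul hE hr.le) x y
      _ < dist x y + ε := by linarith

theorem PreservesDist.dist_eq_of_dist_le {f : E → Y} {r : ℝ} (hf : PreservesDist f r)
    (hlip : LipschitzWith 1 f) {x y : E} (hxy : dist x y ≤ r) : dist (f x) (f y) = dist x y := by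
  rcases eq_or_ne x y with rfl | hne
  · simp
  have hd : 0 < dist x y := dist_pos.2 hne
  have hr : 0 < r := hd.trans_le hxy
  set z := lineMap x y (r / dist x y)
  have hxz : dist x z = r := by
    rw [dist_comm, dist_lineMap_left, Real.norm_of_nonneg (by positivity),
      div_mul_cancel₀ _ hd.ne']
  have hyz : dist y z = r - dist x y := by
    rw [dist_comm, dist_lineMap_right, Real.norm_eq_abs, ← abs_of_pos hd, ← abs_mul,
      abs_of_pos hd, sub_mul, div_mul_cancel₀ _ hd.ne', one_mul, abs_of_nonpos (by linarith)]
    ring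
  have h₁ := hlip.dist_le_mul x y
  have h₂ := hlip.dist_le_mul y z
  have h₃ := dist_triangle (f x) (f y) (f z)
  rw [NNReal.coe_one, one_mul] at h₁ h₂
  rw [hf x z hxz] at h₃
  linarith

variable [StrictConvexSpace ℝ F]

theorem dist_eq_mul_of_dist_succ_of_dist_add_two {g : ℕ → F} {c : ℝ}
    (h₁ : ∀ i, dist (g i) (g (i + 1)) = c) (h₂ : ∀ i, dist (g i) (g (i + 2)) = 2 * c) (k : ℕ) :
    dist (g 0) (g k) = k * c := by
  have hmid : ∀ i, g (i + 1) = midpoint ℝ (g i) (g (i + 2)) := fun i =>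
    eq_midpoint_of_dist_eq_half (by rw [h₁, h₂]; ring) (by rw [h₂, ← h₁ (i + 1)]; ring)
  have hstep : ∀ i, g (i + 1) - g i = g 1 - g 0 := by
    intro i
    induction i with
    | zero => rfl
    | succ i ih =>
      calc g (i + 2) - g (i + 1) = (⅟2 : ℝ) • (g (i + 2) - g i) := by
            rw [hmid i, right_sub_midpoint]
        _ = g (i + 1) - g i := by rw [hmid i, midpoint_sub_left]
        _ = g 1 - g 0 := ih
  calc dist (g 0) (g k) = ‖∑ i ∈ range k, (g (i + 1) - g i)‖ := by
        rw [sum_range_sub, dist_comm, dist_eq_norm]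
    _ = k * c := by
        rw [sum_congr rfl fun i _ => hstep i, sum_const, card_range, RCLike.norm_nsmul ℝ, nsmul_eq_mul, ← dist_eq_norm,
          dist_comm, h₁]

theorem isometry_of_dist_eq_of_dist_le {f : E → F} {r : ℝ} (hr : 0 < r)
    (hf : ∀ x y, dist x y ≤ r → dist (f x) (f y) = dist x y) : Isometry f := by
  refine Isometry.of_dist_eq fun x y => ?_
  obtain ⟨k, hk⟩ := exists_nat_gt (2 * dist x y / r)
  have hk₀ : (0 : ℝ) < k := lt_of_le_of_lt (by positivity) hk
  rw [div_lt_iff₀ hr] at hk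
  set p : ℕ → E := fun i => lineMap x y ((i : ℝ) / k)
  have hp : ∀ i j, dist (p i) (p (i + j)) = j * (dist x y / k) := fun i j => by
    rw [dist_lineMap_div_lineMap_add_div, mul_div_assoc]
  have hpr : ∀ i j, j ≤ 2 → dist (p i) (p (i + j)) ≤ r := fun i j hj => by
    rw [hp i j, ← mul_div_assoc, div_le_iff₀ hk₀]
    have : (j : ℝ) ≤ 2 := by exact_mod_cast hj
    nlinarith [dist_nonneg (x := x) (y := y)]
  have := dist_eq_mul_of_dist_succ_of_dist_add_two (g := f ∘ p) (c := dist x y / k)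
    (fun i => by simpa using (hf _ _ (hpr i 1 (by norm_num))).trans (hp i 1))
    (fun i => by simpa using (hf _ _ (hpr i 2 le_rfl)).trans (hp i 2)) k
  simpa [p, div_self hk₀.ne', mul_div_cancel₀ _ hk₀.ne'] using this

theorem Isometry.hasFDerivAt {f : E → F} (hf : Isometry f) (x : E) :
    HasFDerivAt f hf.affineIsometryOfStrictConvexSpace.linearIsometry.toContinuousLinearMap x :=
  hf.affineIsometryOfStrictConvexSpace.toContinuousAffineMap.hasFDerivAt

end

theorem stmt_2_general (m n : ℕ) (hm : 2 ≤ m)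
    (f : EuclideanSpace ℝ (Fin m) → EuclideanSpace ℝ (Fin n))
    (hlim : ∀ ε > 0, ∃ r, 0 < r ∧ r < ε ∧
      ∀ x y, dist x y = r → dist (f x) (f y) = r) :
    ∀ x, DifferentiableAt ℝ f x ∧ ∀ v, ‖fderiv ℝ f x v‖ = ‖v‖ := by
  have hE : 1 < Module.rank ℝ (EuclideanSpace ℝ (Fin m)) :=
    Module.one_lt_rank_of_one_lt_finrank (by rw [finrank_euclideanSpace_fin]; omega)
  have hlip := lipschitzWith_one_of_forall_exists_preservesDist hE hlim
  obtain ⟨r, hr, -, hfr⟩ := hlim 1 one_pos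
  have hiso : Isometry f :=
    isometry_of_dist_eq_of_dist_le hr fun _ _ => PreservesDist.dist_eq_of_dist_le hfr hlip
  intro x
  have hd := hiso.hasFDerivAt x
  exact ⟨hd.differentiableAt, fun v => by rw [hd.fderiv]; exact LinearIsometry.norm_map _ v⟩

theorem stmt_2 (m n : ℕ) (hm : 2 ≤ m) (hn : 1 ≤ n)
    (f : EuclideanSpace ℝ (Fin m) → EuclideanSpace ℝ (Fin n))
    (hlim : ∀ ε > 0, ∃ r, 0 < r ∧ r < ε ∧
      ∀ x y, dist x y = r → dist (f x) (f y) = r) :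
    ∀ x, DifferentiableAt ℝ f x ∧ ∀ v, ‖fderiv ℝ f x v‖ = ‖v‖ :=
  stmt_2_general m n hm f hlim
end

section
/- Let n ≥ 2, let x₁, x₂ ∈ E^n, and let r₁, r₂ > 0. Then the metric spheres S(x₁, r₁) = {y : d(x₁,y) = r₁} and S(x₂, r₂) = {y : d(x₂,y) = r₂} have nonempty intersection if and only if |r₁ − r₂| ≤ d(x₁, x₂) ≤ r₁ + r₂. (This is part (1) of the Sphere Intersections Theorem in the Euclidean case, where the convexity radius is infinite.) -/
/-!
Two spheres meet iff the corresponding circles in a plane through both centres meet. With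
`d = dist x₁ x₂`, the point `(t d, h)` with `t d² = (d² + r₁² - r₂²) / 2` and
`h² = r₁² - t² d²` lies on both circles exactly when the triangle inequalities hold; in
dimension at least two a unit vector orthogonal to `x₂ - x₁` realises the second axis.
-/

open Module RealInnerProductSpace

variable {E : Type*} [NormedAddCommGroup E] [InnerProductSpace ℝ E]

theorem exists_norm_eq_one_inner_eq_zero [FiniteDimensional ℝ E] (hE : 2 ≤ finrank ℝ E) (v : E) :
    ∃ u : E, ‖u‖ = 1 ∧ ⟪v, u⟫ = 0 := by
  have : Nontrivial (ℝ ∙ v)ᗮ := by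
    apply Module.nontrivial_of_finrank_pos (R := ℝ)
    have := (ℝ ∙ v).finrank_add_finrank_orthogonal
    have : finrank ℝ (ℝ ∙ v) ≤ 1 := by simpa using finrank_span_le_card (R := ℝ) ({v} : Set E)
    lia
  obtain ⟨w, hw⟩ : ∃ w : (ℝ ∙ v)ᗮ, w ≠ 0 := exists_ne 0
  refine ⟨‖(w : E)‖⁻¹ • (w : E), norm_smul_inv_norm (by simpa using hw), ?_⟩
  rw [inner_smul_right, Submodule.mem_orthogonal_singleton_iff_inner_right.mp w.2, mul_zero]

theorem exists_mul_sq_add_sq_eq_sq {d r₁ r₂ : ℝ} (h₁ : |r₁ - r₂| ≤ d) (h₂ : d ≤ r₁ + r₂) :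
    ∃ t h : ℝ, t ^ 2 * d ^ 2 + h ^ 2 = r₁ ^ 2 ∧ (t - 1) ^ 2 * d ^ 2 + h ^ 2 = r₂ ^ 2 := by
  obtain ⟨hlo, hhi⟩ := abs_le.mp h₁
  rcases (abs_nonneg _ |>.trans h₁).eq_or_lt with rfl | hd
  · exact ⟨0, r₁, by ring, by nlinarith⟩
  set t := (d ^ 2 + r₁ ^ 2 - r₂ ^ 2) / (2 * d ^ 2)
  have htd : t * d ^ 2 = (d ^ 2 + r₁ ^ 2 - r₂ ^ 2) / 2 := by
    simp only [t]; field_simp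
  -- Heron: the difference of the two squares is the product of the four triangle quantities.
  have heron : (d ^ 2 + r₁ ^ 2 - r₂ ^ 2) ^ 2 ≤ (2 * d * r₁) ^ 2 := by
    have := mul_nonneg (mul_nonneg (mul_nonneg (sub_nonneg.2 h₂) (sub_nonneg.2 hhi))
      (neg_le_iff_add_nonneg.1 hlo)) (by linarith : 0 ≤ d + r₁ + r₂)
    nlinarith [this]
  have ht : t ^ 2 * d ^ 2 ≤ r₁ ^ 2 := by
    refine le_of_mul_le_mul_right ?_ (by positivity : 0 < d ^ 2)
    calc t ^ 2 * d ^ 2 * d ^ 2 = (t * d ^ 2) ^ 2 := by ring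
      _ = (d ^ 2 + r₁ ^ 2 - r₂ ^ 2) ^ 2 / 4 := by rw [htd]; ring
      _ ≤ (2 * d * r₁) ^ 2 / 4 := by gcongr
      _ = r₁ ^ 2 * d ^ 2 := by ring
  refine ⟨t, √(r₁ ^ 2 - t ^ 2 * d ^ 2), ?_, ?_⟩ <;> rw [Real.sq_sqrt (by linarith)]
  · ring
  · linear_combination (-2) * htd

theorem norm_smul_add_smul_sq {v u : E} (hvu : ⟪v, u⟫ = 0) (hu : ‖u‖ = 1) (a b : ℝ) :
    ‖a • v + b • u‖ ^ 2 = a ^ 2 * ‖v‖ ^ 2 + b ^ 2 := by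
  have : ⟪a • v, b • u⟫ = 0 := by simp [inner_smul_left, inner_smul_right, hvu]
  rw [sq, norm_add_sq_eq_norm_sq_add_norm_sq_real this]
  simp [← sq, norm_smul, mul_pow, hu]

theorem exists_dist_eq_dist_eq_of_inner_eq_zero {x₁ x₂ u : E} (hu : ‖u‖ = 1)
    (hxu : ⟪x₂ - x₁, u⟫ = 0) {r₁ r₂ : ℝ} (h₁ : |r₁ - r₂| ≤ dist x₁ x₂)
    (h₂ : dist x₁ x₂ ≤ r₁ + r₂) : ∃ y, dist x₁ y = r₁ ∧ dist x₂ y = r₂ := by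
  have hr₁ : 0 ≤ r₁ := by linarith [neg_abs_le (r₁ - r₂)]
  have hr₂ : 0 ≤ r₂ := by linarith [le_abs_self (r₁ - r₂)]
  obtain ⟨t, h, ht₁, ht₂⟩ := exists_mul_sq_add_sq_eq_sq h₁ h₂
  rw [dist_eq_norm'] at ht₁ ht₂
  refine ⟨x₁ + t • (x₂ - x₁) + h • u, ?_, ?_⟩
  · rw [dist_eq_norm', ← sq_eq_sq₀ (norm_nonneg _) hr₁, ← ht₁, ← norm_smul_add_smul_sq hxu hu]
    congr 2; abel
  · rw [dist_eq_norm', ← sq_eq_sq₀ (norm_nonneg _) hr₂, ← ht₂, ← norm_smul_add_smul_sq hxu hu,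
      sub_smul, one_smul]
    congr 2; abel

theorem stmt_6_general (n : ℕ) (hn : 2 ≤ n)
    (x₁ x₂ : EuclideanSpace ℝ (Fin n)) (r₁ r₂ : ℝ) :
    ({y | dist x₁ y = r₁} ∩ {y | dist x₂ y = r₂}).Nonempty ↔
      |r₁ - r₂| ≤ dist x₁ x₂ ∧ dist x₁ x₂ ≤ r₁ + r₂ := by
  constructor
  · rintro ⟨y, rfl, rfl⟩
    exact ⟨abs_dist_sub_le x₁ x₂ y, dist_triangle_right x₁ x₂ y⟩
  · rintro ⟨h₁, h₂⟩
    obtain ⟨u, hu, hxu⟩ := exists_norm_eq_one_inner_eq_zero (by simpa using hn) (x₂ - x₁)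
    exact exists_dist_eq_dist_eq_of_inner_eq_zero hu hxu h₁ h₂

theorem stmt_6 (n : ℕ) (hn : 2 ≤ n)
    (x₁ x₂ : EuclideanSpace ℝ (Fin n)) (r₁ r₂ : ℝ) (hr₁ : 0 < r₁) (hr₂ : 0 < r₂) :
    ({y | dist x₁ y = r₁} ∩ {y | dist x₂ y = r₂}).Nonempty ↔
      |r₁ - r₂| ≤ dist x₁ x₂ ∧ dist x₁ x₂ ≤ r₁ + r₂ :=
  stmt_6_general n hn x₁ x₂ r₁ r₂
end

section
/- Let n ≥ 2, let f : E^n → E^n be a function, let r > 0 be a distance preserved by f, and let x₁, x₂ ∈ E^n. If d(x₁, x₂) ≤ 2r, then d(f(x₁), f(x₂)) ≤ 2r. -/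
/-!
Points at distance at most `2r` are joined by two steps of length exactly `r`: in dimension at
least two the spheres of radius `r` around them meet. Each step is preserved by `f`, so the
triangle inequality bounds the distance of the images by `2r`.
-/

open Metric AffineMap

theorem exists_dist_eq_dist_eq_of_abs_sub_le_of_le_add {E : Type*} [NormedAddCommGroup E]
    [NormedSpace ℝ E] (hE : 1 < Module.rank ℝ E) {x y : E} {r₁ r₂ : ℝ}
    (h₁ : |r₁ - r₂| ≤ dist x y) (h₂ : dist x y ≤ r₁ + r₂) :
    ∃ z, dist x z = r₁ ∧ dist z y = r₂ := by
  obtain ⟨hlo, hhi⟩ := abs_le.1 h₁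
  have hr₁ : 0 ≤ r₁ := by linarith
  rcases eq_or_ne x y with rfl | hxy
  · have : Nontrivial E := (rank_pos_iff_nontrivial (R := ℝ)).1 (zero_lt_one.trans hE)
    have hr : r₁ = r₂ := by rw [dist_self] at hlo hhi; linarith
    obtain ⟨z, hz⟩ := (NormedSpace.sphere_nonempty (x := x)).2 hr₁
    exact ⟨z, mem_sphere'.1 hz, hr ▸ mem_sphere.1 hz⟩
  -- The sphere around `x` is connected, and the distance to `y` is `≤ r₂` and `≥ r₂` at the two
  -- points where the line `xy` meets it.
  have hd : 0 < dist x y := dist_pos.2 hxy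
  set c := r₁ / dist x y
  have hcd : c * dist x y = r₁ := div_mul_cancel₀ r₁ hd.ne'
  have hc : 0 ≤ c := div_nonneg hr₁ hd.le
  have hnear : lineMap x y c ∈ sphere x r₁ := by
    rw [mem_sphere, dist_lineMap_left, Real.norm_of_nonneg hc, hcd]
  have hfar : lineMap x y (-c) ∈ sphere x r₁ := by
    rw [mem_sphere, dist_lineMap_left, norm_neg, Real.norm_of_nonneg hc, hcd]
  have hnear_le : dist (lineMap x y c) y ≤ r₂ := by
    rw [dist_lineMap_right, Real.norm_eq_abs, ← abs_of_pos hd, ← abs_mul, sub_mul, one_mul, hcd,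
      abs_le]
    constructor <;> linarith
  have hfar_ge : r₂ ≤ dist (lineMap x y (-c)) y := by
    rw [dist_lineMap_right, sub_neg_eq_add, Real.norm_of_nonneg (by linarith), add_mul, hcd,
      one_mul]
    linarith
  obtain ⟨z, hz, hzy⟩ := (isPreconnected_sphere hE x r₁).intermediate_value hnear hfar
    (continuous_id.dist continuous_const).continuousOn ⟨hnear_le, hfar_ge⟩
  exact ⟨z, mem_sphere'.1 hz, hzy⟩

theorem stmt_8_general (n : ℕ) (hn : 2 ≤ n)
    (f : EuclideanSpace ℝ (Fin n) → EuclideanSpace ℝ (Fin n))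
    (r : ℝ)
    (hpr : ∀ x y, dist x y = r → dist (f x) (f y) = r)
    (x₁ x₂ : EuclideanSpace ℝ (Fin n)) (h : dist x₁ x₂ ≤ 2 * r) :
    dist (f x₁) (f x₂) ≤ 2 * r := by
  have hrank : 1 < Module.rank ℝ (EuclideanSpace ℝ (Fin n)) := by
    rw [← Module.finrank_eq_rank, finrank_euclideanSpace_fin]
    exact_mod_cast hn
  obtain ⟨z, h₁, h₂⟩ := exists_dist_eq_dist_eq_of_abs_sub_le_of_le_add hrank
    (by simp) (two_mul r ▸ h)
  calc dist (f x₁) (f x₂) ≤ dist (f x₁) (f z) + dist (f z) (f x₂) := dist_triangle _ _ _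
    _ = 2 * r := by rw [hpr _ _ h₁, hpr _ _ h₂, two_mul]

theorem stmt_8 (n : ℕ) (hn : 2 ≤ n)
    (f : EuclideanSpace ℝ (Fin n) → EuclideanSpace ℝ (Fin n))
    (r : ℝ) (hr : 0 < r)
    (hpr : ∀ x y, dist x y = r → dist (f x) (f y) = r)
    (x₁ x₂ : EuclideanSpace ℝ (Fin n)) (h : dist x₁ x₂ ≤ 2 * r) :
    dist (f x₁) (f x₂) ≤ 2 * r :=
  stmt_8_general n hn f r hpr x₁ x₂ h
end

section
/- Let n ≥ 2, let a, b ∈ E^n, and let r > 0. Then d(a, b) < r if and only if both S(a, r) ∩ S(b, r) ≠ ∅ and S(a, 2r) ∩ S(b, r) = ∅. (This is the Euclidean-space instance of Lemma 'small', combining parts (1) and (2); in Euclidean space the convexity radius is infinite so the radius restrictions are vacuous.) -/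
open Real RealInnerProductSpace

lemma exists_unit_orth (n : ℕ) (hn : 2 ≤ n) (x : EuclideanSpace ℝ (Fin n)) :
    ∃ v : EuclideanSpace ℝ (Fin n), ‖v‖ = 1 ∧ ⟪x, v⟫ = 0 := by
  have hne : (ℝ ∙ x)ᗮ ≠ ⊥ := by
    intro h
    rw [Submodule.orthogonal_eq_bot_iff] at h
    have h1 : Module.finrank ℝ (ℝ ∙ x) ≤ 1 := by
      simpa using finrank_span_le_card ({x} : Set (EuclideanSpace ℝ (Fin n)))
    have h2 : Module.finrank ℝ (EuclideanSpace ℝ (Fin n)) = n := by simp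
    rw [h, finrank_top, h2] at h1
    omega
  obtain ⟨w, hw, hw0⟩ := Submodule.exists_mem_ne_zero_of_ne_bot hne
  refine ⟨‖w‖⁻¹ • w, ?_, ?_⟩
  · rw [norm_smul, norm_inv, norm_norm, inv_mul_cancel₀ (norm_ne_zero_iff.2 hw0)]
  · have := (Submodule.mem_orthogonal _ w).1 hw x (Submodule.mem_span_singleton_self x)
    rw [real_inner_smul_right, this, mul_zero]

lemma sphere_inter (n : ℕ) (hn : 2 ≤ n) (a b : EuclideanSpace ℝ (Fin n)) (r1 r2 : ℝ)
    (hr1 : 0 ≤ r1) (hd : 0 < dist a b) (h1 : |r1 - r2| ≤ dist a b) (h2 : dist a b ≤ r1 + r2) :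
    ∃ y, dist a y = r1 ∧ dist b y = r2 := by
  obtain ⟨v, hv1, hv0⟩ := exists_unit_orth n hn (b - a)
  obtain ⟨d, hdd⟩ : ∃ d, dist a b = d := ⟨_, rfl⟩
  rw [hdd] at hd h1 h2
  have hd0 : d ≠ 0 := ne_of_gt hd
  have habs := abs_le.1 h1
  have hr2 : 0 ≤ r2 := by nlinarith [habs.1, habs.2]
  obtain ⟨t, h, hth1, hth2, hhnn⟩ :
      ∃ t h : ℝ, t ^ 2 + h ^ 2 = r1 ^ 2 ∧ (d - t) ^ 2 + h ^ 2 = r2 ^ 2 ∧ 0 ≤ h := by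
    set t0 : ℝ := (d ^ 2 + r1 ^ 2 - r2 ^ 2) / (2 * d) with ht0
    have hnn : 0 ≤ r1 ^ 2 - t0 ^ 2 := by
      rw [ht0, div_pow, sub_nonneg, div_le_iff₀ (by positivity)]
      have hA : 0 ≤ d - r1 + r2 := by linarith [habs.1]
      have hB : 0 ≤ d + r1 - r2 := by linarith [habs.2]
      have hC : 0 ≤ r1 + r2 - d := by linarith
      have hD : 0 ≤ r1 + r2 + d := by linarith
      nlinarith [mul_nonneg (mul_nonneg hA hB) (mul_nonneg hC hD)]
    have hs : Real.sqrt (r1 ^ 2 - t0 ^ 2) ^ 2 = r1 ^ 2 - t0 ^ 2 := Real.sq_sqrt hnn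
    refine ⟨t0, Real.sqrt (r1 ^ 2 - t0 ^ 2), by rw [hs]; ring, ?_, Real.sqrt_nonneg _⟩
    rw [hs, ht0]
    field_simp
    ring
  have hub : ‖b - a‖ = d := by rw [← hdd, dist_eq_norm, norm_sub_rev]
  obtain ⟨u, hunorm, huv, hba⟩ :
      ∃ u : EuclideanSpace ℝ (Fin n), ‖u‖ = 1 ∧ ⟪u, v⟫ = 0 ∧ b = a + d • u := by
    refine ⟨d⁻¹ • (b - a), ?_, ?_, ?_⟩
    · rw [norm_smul, hub, norm_inv, Real.norm_of_nonneg hd.le, inv_mul_cancel₀ hd0]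
    · rw [real_inner_smul_left, hv0, mul_zero]
    · rw [smul_smul, mul_inv_cancel₀ hd0, one_smul]; abel
  refine ⟨a + t • u + h • v, ?_, ?_⟩
  · have key : dist a (a + t • u + h • v) ^ 2 = r1 ^ 2 := by
      rw [dist_eq_norm]
      have heq : a - (a + t • u + h • v) = -(t • u + h • v) := by abel
      rw [heq, norm_neg, norm_add_sq_real, real_inner_smul_left, real_inner_smul_right,
        huv, norm_smul, norm_smul, hunorm, hv1]
      rw [mul_one, mul_one, Real.norm_eq_abs, Real.norm_eq_abs]
      simp only [mul_zero, add_zero]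
      rw [sq_abs, sq_abs]
      exact hth1
    have hnn : 0 ≤ dist a (a + t • u + h • v) := dist_nonneg
    nlinarith [key, hnn, hr1]
  · have key : dist b (a + t • u + h • v) ^ 2 = r2 ^ 2 := by
      rw [dist_eq_norm, hba]
      have heq : a + d • u - (a + t • u + h • v) = (d - t) • u + (-h) • v := by
        rw [sub_smul, neg_smul]; abel
      rw [heq, norm_add_sq_real, real_inner_smul_left, real_inner_smul_right,
        huv, norm_smul, norm_smul, hunorm, hv1]
      rw [mul_one, mul_one, Real.norm_eq_abs, Real.norm_eq_abs]
      simp only [neg_mul, mul_zero, neg_zero, add_zero]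
      rw [sq_abs, abs_neg, sq_abs]
      exact hth2
    have hnn : 0 ≤ dist b (a + t • u + h • v) := dist_nonneg
    nlinarith [key, hnn, hr2]

theorem stmt_10 (n : ℕ) (hn : 2 ≤ n)
    (a b : EuclideanSpace ℝ (Fin n)) (r : ℝ) (hr : 0 < r) :
    dist a b < r ↔
      ({y | dist a y = r} ∩ {y | dist b y = r}).Nonempty ∧
      {y | dist a y = 2 * r} ∩ {y | dist b y = r} = ∅ := by
  constructor
  · intro hlt
    constructor
    · by_cases hab : a = b
      · subst hab
        obtain ⟨v, hv1, -⟩ := exists_unit_orth n hn 0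
        refine ⟨a + r • v, ?_, ?_⟩ <;>
        · show dist a (a + r • v) = r
          rw [dist_eq_norm]
          have heq : a - (a + r • v) = -(r • v) := by abel
          rw [heq, norm_neg, norm_smul, hv1, mul_one, Real.norm_of_nonneg hr.le]
      · have hd : 0 < dist a b := dist_pos.2 hab
        obtain ⟨y, hy1, hy2⟩ := sphere_inter n hn a b r r hr.le hd
          (by rw [sub_self, abs_zero]; exact hd.le) (by linarith)
        exact ⟨y, hy1, hy2⟩
    · ext y
      simp only [Set.mem_inter_iff, Set.mem_setOf_eq, Set.mem_empty_iff_false, iff_false,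
        not_and]
      intro h1 h2
      have := dist_triangle a b y
      rw [h1, h2] at this
      linarith
  · rintro ⟨⟨y, hy1, hy2⟩, hempty⟩
    simp only [Set.mem_setOf_eq] at hy1 hy2
    by_contra hge
    push_neg at hge
    have hub : dist a b ≤ 2 * r := by
      have := dist_triangle a y b
      rw [hy1, dist_comm y b, hy2] at this
      linarith
    have hd : 0 < dist a b := lt_of_lt_of_le hr hge
    obtain ⟨z, hz1, hz2⟩ := sphere_inter n hn a b (2 * r) r (by linarith) hd
      (by rw [abs_of_nonneg (by linarith)]; linarith) (by linarith)
    have : z ∈ ({y | dist a y = 2 * r} ∩ {y | dist b y = r}) := ⟨hz1, hz2⟩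
    rw [hempty] at this
    exact this
end

section
/- Let n ≥ 2 and let f : E^n → E^n be a function. If there exists r > 0 that is strongly preserved by f, then f is injective. -/
theorem stmt_11 (n : ℕ) (hn : 2 ≤ n)
    (f : EuclideanSpace ℝ (Fin n) → EuclideanSpace ℝ (Fin n))
    (r : ℝ) (hr : 0 < r)
    (hpr : ∀ x y, dist x y = r ↔ dist (f x) (f y) = r) :
    Function.Injective f := by
  intro x y hf
  by_contra hxy
  have hd : x - y ≠ 0 := sub_ne_zero.mpr hxy
  have hdn : (0:ℝ) < ‖x - y‖ := norm_pos_iff.mpr hd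
  set z := x + (r / ‖x - y‖) • (x - y) with hz
  have h1 : dist x z = r := by
    rw [dist_eq_norm]
    have : x - z = -((r / ‖x - y‖) • (x - y)) := by rw [hz]; module
    rw [this, norm_neg, norm_smul, Real.norm_eq_abs,
      abs_of_pos (div_pos hr hdn), div_mul_cancel₀ _ hdn.ne']
  have h2 : dist y z = ‖x - y‖ + r := by
    rw [dist_eq_norm]
    have : y - z = -((1 + r / ‖x - y‖) • (x - y)) := by rw [hz]; module
    rw [this, norm_neg, norm_smul, Real.norm_eq_abs,
      abs_of_pos (by positivity : (0:ℝ) < 1 + r / ‖x - y‖),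
      add_mul, one_mul, div_mul_cancel₀ _ hdn.ne']
  have hzr : dist (f x) (f z) = r := (hpr x z).mp h1
  have hyz : dist y z = r := (hpr y z).mpr (hf ▸ hzr)
  rw [h2] at hyz
  linarith
end

section
/- Let n ≥ 2 and let f : E^n → E^n be a surjective function. Suppose r₁ > r₂ > 0 are both strongly preserved by f. If x₁, x₂ ∈ E^n satisfy d(x₁, x₂) ∈ {r₁ − r₂, r₁ + r₂}, then d(f(x₁), f(x₂)) ∈ {r₁ − r₂, r₁ + r₂}. -/
set_option maxHeartbeats 1000000

open RealInnerProductSpace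

theorem two_points {E : Type*} [NormedAddCommGroup E] [InnerProductSpace ℝ E]
    [FiniteDimensional ℝ E] (hdim : 2 ≤ Module.finrank ℝ E)
    {a b : E} {r₁ r₂ : ℝ} (hr₂ : 0 < r₂) (hr : r₂ < r₁)
    (hlo : r₁ - r₂ < dist a b) (hhi : dist a b < r₁ + r₂) :
    ∃ z z', z ≠ z' ∧ dist a z = r₁ ∧ dist z b = r₂ ∧ dist a z' = r₁ ∧ dist z' b = r₂ := by
  set w := b - a with hw
  set d := dist a b with hdd
  have hd : 0 < d := by linarith
  have hnw : ‖w‖ = d := by rw [hw, ← dist_eq_norm, dist_comm]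
  have hw0 : w ≠ 0 := by
    intro h0; rw [h0, norm_zero] at hnw; linarith
  -- find a unit vector orthogonal to w
  obtain ⟨u₀, hu₀mem, hu₀⟩ : ∃ u₀, u₀ ∈ (ℝ ∙ w)ᗮ ∧ u₀ ≠ 0 := by
    apply Submodule.exists_mem_ne_zero_of_ne_bot
    intro hbot
    have h1 : Module.finrank ℝ (ℝ ∙ w) = 1 := finrank_span_singleton hw0
    have h2 := Submodule.finrank_add_finrank_orthogonal (K := (ℝ ∙ w))
    rw [hbot, h1, finrank_bot] at h2
    omega
  set u : E := ‖u₀‖⁻¹ • u₀ with hu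
  have hnu : ‖u‖ = 1 := by
    rw [hu, norm_smul, norm_inv, norm_norm]
    field_simp [norm_ne_zero_iff.mpr hu₀]
  have hwu : ⟪w, u⟫ = 0 := by
    rw [Submodule.mem_orthogonal] at hu₀mem
    rw [hu, inner_smul_right, hu₀mem w (Submodule.mem_span_singleton_self w), mul_zero]
  set t : ℝ := (d^2 + r₁^2 - r₂^2)/(2*d) with htdef
  have ht : 2*d*t = d^2 + r₁^2 - r₂^2 := by rw [htdef]; field_simp
  have ht1 : 0 < r₁ - t := by nlinarith
  have ht2 : 0 < r₁ + t := by nlinarith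
  have hpos : 0 < r₁^2 - t^2 := by nlinarith
  set h : ℝ := Real.sqrt (r₁^2 - t^2) with hhdef
  have hh : h^2 = r₁^2 - t^2 := Real.sq_sqrt hpos.le
  have hh0 : 0 < h := Real.sqrt_pos.mpr hpos
  have key : ∀ c₁ c₂ : ℝ, ‖c₁ • w + c₂ • u‖^2 = c₁^2*d^2 + c₂^2 := by
    intro c₁ c₂
    rw [norm_add_sq_real, inner_smul_left, inner_smul_right, hwu, norm_smul, norm_smul,
      hnw, hnu]
    simp only [Real.norm_eq_abs, conj_trivial, mul_zero, zero_mul, mul_one, one_pow]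
    rw [mul_pow]
    simp only [sq_abs]
    ring
  have norm_eq : ∀ (x : E) (r : ℝ), 0 ≤ r → ‖x‖^2 = r^2 → ‖x‖ = r := by
    intro x r hr0 hx
    rw [← Real.sqrt_sq (norm_nonneg x), hx, Real.sqrt_sq hr0]
  have main : ∀ c : ℝ, c^2 = h^2 →
      dist a (a + ((t/d) • w + c • u)) = r₁ ∧ dist (a + ((t/d) • w + c • u)) b = r₂ := by
    intro c hc
    constructor
    · rw [dist_comm, dist_eq_norm, add_sub_cancel_left]
      apply norm_eq _ _ (by linarith)
      rw [key]
      field_simp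
      nlinarith
    · rw [dist_eq_norm]
      have : a + ((t/d) • w + c • u) - b = (t/d - 1) • w + c • u := by
        rw [sub_smul, one_smul, hw]
        abel
      rw [this]
      apply norm_eq _ _ hr₂.le
      rw [key]
      have : (t/d - 1)^2 * d^2 = (t - d)^2 := by field_simp
      rw [this, hc]
      nlinarith
  refine ⟨a + ((t/d) • w + h • u), a + ((t/d) • w + (-h) • u), ?_,
    (main h rfl).1, (main h rfl).2, (main (-h) (by ring)).1, (main (-h) (by ring)).2⟩
  intro heq
  have : h • u = (-h) • u := by
    have := add_left_cancel heq
    exact add_left_cancel this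
  rw [neg_smul, eq_neg_iff_add_eq_zero, ← two_smul ℝ, smul_smul] at this
  have := smul_eq_zero.mp this
  rcases this with h1 | h1
  · nlinarith
  · rw [h1, norm_zero] at hnu; linarith

theorem uniq_aux {E : Type*} [NormedAddCommGroup E] [InnerProductSpace ℝ E]
    {a b z : E} {r₁ r₂ s : ℝ} (hs : 0 < s)
    (hps : r₁^2 + s^2 - r₂^2 = 2*r₁*s)
    (hab : dist a b = s) (h1 : dist a z = r₁) (h2 : dist z b = r₂) :
    z = a + (r₁/s) • (b - a) := by
  set u := z - a with hu
  set w := b - a with hw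
  have hnu : ‖u‖ = r₁ := by rw [hu, ← dist_eq_norm, dist_comm]; exact h1
  have hnw : ‖w‖ = s := by rw [hw, ← dist_eq_norm, dist_comm]; exact hab
  have huw : u - w = z - b := by rw [hu, hw]; abel
  have hnuw : ‖u - w‖ = r₂ := by rw [huw, ← dist_eq_norm]; exact h2
  have hkey : ⟪u, w⟫ = ‖u‖ * ‖w‖ := by
    rw [hnu, hnw]
    have := norm_sub_sq_real u w
    rw [hnu, hnw, hnuw] at this
    linarith
  have h3 := inner_eq_norm_mul_iff_real.mp hkey
  rw [hnu, hnw] at h3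
  have h4 : u = (r₁/s) • w := by
    have := congrArg (fun x => s⁻¹ • x) h3
    simpa [smul_smul, hs.ne', div_eq_inv_mul, mul_comm] using this
  rw [hu] at h4
  rw [← h4]; abel

theorem exist_aux {E : Type*} [NormedAddCommGroup E] [InnerProductSpace ℝ E]
    {a b : E} {r₁ r₂ s : ℝ} (hr₁ : 0 < r₁) (hs : 0 < s)
    (habs : |r₁ - s| = r₂) (hab : dist a b = s) :
    dist a (a + (r₁/s) • (b - a)) = r₁ ∧ dist (a + (r₁/s) • (b - a)) b = r₂ := by
  have hnw : ‖b - a‖ = s := by rw [← dist_eq_norm, dist_comm]; exact hab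
  constructor
  · rw [dist_comm, dist_eq_norm, add_sub_cancel_left, norm_smul, hnw, Real.norm_eq_abs,
      abs_of_pos (div_pos hr₁ hs)]
    field_simp
  · rw [dist_eq_norm]
    have h1 : a + (r₁/s) • (b - a) - b = (r₁/s - 1) • (b - a) := by
      rw [sub_smul, one_smul]; abel
    rw [h1, norm_smul, hnw, Real.norm_eq_abs]
    have h2 : r₁/s - 1 = (r₁ - s)/s := by field_simp
    rw [h2, abs_div, abs_of_pos hs, habs]
    field_simp

theorem stmt_14 (n : ℕ) (hn : 2 ≤ n)
    (f : EuclideanSpace ℝ (Fin n) → EuclideanSpace ℝ (Fin n))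
    (hf : Function.Surjective f)
    (r₁ r₂ : ℝ) (hr₂ : 0 < r₂) (hr : r₂ < r₁)
    (hp₁ : ∀ x y, dist x y = r₁ ↔ dist (f x) (f y) = r₁)
    (hp₂ : ∀ x y, dist x y = r₂ ↔ dist (f x) (f y) = r₂)
    (x₁ x₂ : EuclideanSpace ℝ (Fin n))
    (h : dist x₁ x₂ ∈ ({r₁ - r₂, r₁ + r₂} : Set ℝ)) :
    dist (f x₁) (f x₂) ∈ ({r₁ - r₂, r₁ + r₂} : Set ℝ) := by
  have hr₁ : 0 < r₁ := lt_trans hr₂ hr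
  have hdim : 2 ≤ Module.finrank ℝ (EuclideanSpace ℝ (Fin n)) := by
    rw [finrank_euclideanSpace_fin]; exact hn
  obtain ⟨s, hsmem, hs⟩ : ∃ s, (s = r₁ - r₂ ∨ s = r₁ + r₂) ∧ dist x₁ x₂ = s := by
    rcases h with h | h
    · exact ⟨r₁ - r₂, Or.inl rfl, h⟩
    · exact ⟨r₁ + r₂, Or.inr rfl, h⟩
  have hs0 : 0 < s := by rcases hsmem with rfl | rfl <;> linarith
  have hps : r₁^2 + s^2 - r₂^2 = 2*r₁*s := by rcases hsmem with rfl | rfl <;> ring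
  have habs : |r₁ - s| = r₂ := by
    rcases hsmem with rfl | rfl
    · rw [show r₁ - (r₁ - r₂) = r₂ by ring, abs_of_pos hr₂]
    · rw [show r₁ - (r₁ + r₂) = -r₂ by ring, abs_neg, abs_of_pos hr₂]
  set z₀ : EuclideanSpace ℝ (Fin n) := x₁ + (r₁/s) • (x₂ - x₁) with hz₀
  obtain ⟨hz1, hz2⟩ := exist_aux (a := x₁) (b := x₂) hr₁ hs0 habs hs
  rw [← hz₀] at hz1 hz2
  have h1' : dist (f x₁) (f z₀) = r₁ := (hp₁ _ _).mp hz1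
  have h2' : dist (f z₀) (f x₂) = r₂ := (hp₂ _ _).mp hz2
  have hup : dist (f x₁) (f x₂) ≤ r₁ + r₂ := by
    calc dist (f x₁) (f x₂) ≤ dist (f x₁) (f z₀) + dist (f z₀) (f x₂) := dist_triangle _ _ _
    _ = r₁ + r₂ := by rw [h1', h2']
  have hlow : r₁ - r₂ ≤ dist (f x₁) (f x₂) := by
    have := dist_triangle (f x₁) (f x₂) (f z₀)
    rw [dist_comm (f x₂) (f z₀), h1', h2'] at this
    linarith
  by_contra hcon
  simp only [Set.mem_insert_iff, Set.mem_singleton_iff, not_or] at hcon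
  obtain ⟨hc1, hc2⟩ := hcon
  have hlo' : r₁ - r₂ < dist (f x₁) (f x₂) := lt_of_le_of_ne hlow (Ne.symm hc1)
  have hhi' : dist (f x₁) (f x₂) < r₁ + r₂ := lt_of_le_of_ne hup hc2
  obtain ⟨z, z', hne, ha1, hb1, ha2, hb2⟩ := two_points hdim hr₂ hr hlo' hhi'
  obtain ⟨c, rfl⟩ := hf z
  obtain ⟨c', rfl⟩ := hf z'
  have hc : c = z₀ := by
    rw [hz₀]
    exact uniq_aux hs0 hps hs ((hp₁ _ _).mpr ha1) ((hp₂ _ _).mpr hb1)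
  have hc' : c' = z₀ := by
    rw [hz₀]
    exact uniq_aux hs0 hps hs ((hp₁ _ _).mpr ha2) ((hp₂ _ _).mpr hb2)
  rw [hc, hc'] at hne
  exact hne rfl
end

section
/- Let n ≥ 2 and let f : E^n → E^n be a surjective function. If r > 0 is strongly preserved by f, then 2r is strongly preserved by f. -/
open scoped RealInnerProductSpace

lemma aux_exists_unit_orth {n : ℕ} (hn : 2 ≤ n) (v : EuclideanSpace ℝ (Fin n)) :
    ∃ u : EuclideanSpace ℝ (Fin n), ‖u‖ = 1 ∧ ⟪v, u⟫ = 0 := by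
  have hne : (ℝ ∙ v)ᗮ ≠ ⊥ := by
    intro hbot
    have htop := (Submodule.orthogonal_eq_bot_iff).mp hbot
    have hfr : Module.finrank ℝ (ℝ ∙ v : Submodule ℝ (EuclideanSpace ℝ (Fin n))) = n := by
      rw [htop, finrank_top, finrank_euclideanSpace_fin]
    rcases eq_or_ne v 0 with rfl | hv
    · rw [Submodule.span_zero_singleton, finrank_bot] at hfr; omega
    · rw [finrank_span_singleton hv] at hfr; omega
  obtain ⟨w, hwmem, hw0⟩ := Submodule.exists_mem_ne_zero_of_ne_bot hne
  refine ⟨‖w‖⁻¹ • w, norm_smul_inv_norm hw0, ?_⟩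
  have hvw : ⟪v, w⟫ = 0 := (Submodule.mem_orthogonal _ _).mp hwmem v
    (Submodule.mem_span_singleton_self v)
  rw [real_inner_smul_right, hvw, mul_zero]

variable {F : Type*} [NormedAddCommGroup F] [InnerProductSpace ℝ F]

lemma aux_norm_combo (v u : F) (c t : ℝ)
    (hu : ‖u‖ = 1) (hvu : ⟪v, u⟫ = 0) :
    ‖c • v + t • u‖ ^ 2 = c ^ 2 * ‖v‖ ^ 2 + t ^ 2 := by
  rw [norm_add_sq_real, norm_smul, norm_smul, real_inner_smul_left, real_inner_smul_right,
    hvu, hu]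
  simp only [Real.norm_eq_abs, mul_zero, mul_one, mul_pow, sq_abs]
  ring

lemma aux_key (x y u : F) (hu : ‖u‖ = 1) (hvu : ⟪y - x, u⟫ = 0)
    (s r : ℝ) (hr : 0 ≤ r) (hs : s ^ 2 + (‖y - x‖ / 2) ^ 2 = r ^ 2) :
    dist x (x + ((1:ℝ)/2) • (y - x) + s • u) = r ∧
    dist y (x + ((1:ℝ)/2) • (y - x) + s • u) = r := by
  constructor
  · rw [dist_eq_norm]
    have h1 : x - (x + ((1:ℝ)/2) • (y - x) + s • u)
        = (-(1/2) : ℝ) • (y - x) + (-s) • u := by module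
    rw [h1]
    have h2 : ‖(-(1/2) : ℝ) • (y - x) + (-s) • u‖ ^ 2 = r ^ 2 := by
      rw [aux_norm_combo (y - x) u (-(1/2)) (-s) hu hvu]; nlinarith
    have h3 := congrArg Real.sqrt h2
    rwa [Real.sqrt_sq (norm_nonneg _), Real.sqrt_sq hr] at h3
  · rw [dist_eq_norm]
    have h1 : y - (x + ((1:ℝ)/2) • (y - x) + s • u)
        = ((1:ℝ)/2) • (y - x) + (-s) • u := by module
    rw [h1]
    have h2 : ‖((1:ℝ)/2) • (y - x) + (-s) • u‖ ^ 2 = r ^ 2 := by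
      rw [aux_norm_combo (y - x) u ((1:ℝ)/2) (-s) hu hvu]; nlinarith
    have h3 := congrArg Real.sqrt h2
    rwa [Real.sqrt_sq (norm_nonneg _), Real.sqrt_sq hr] at h3

lemma aux_ne (x w u : F) (hu : u ≠ 0) {s s' : ℝ} (hss : s ≠ s') :
    x + w + s • u ≠ x + w + s' • u := by
  intro h
  have h1 : s • u = s' • u := by
    have := add_left_cancel (add_left_cancel ((add_assoc x w (s • u)).symm.trans
      (h.trans (add_assoc x w (s' • u)))))
    exact this
  have h2 : (s - s') • u = 0 := by rw [sub_smul, h1, sub_self]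
  rcases smul_eq_zero.mp h2 with h' | h'
  · exact hss (sub_eq_zero.mp h')
  · exact hu h'

lemma aux_char {n : ℕ} (hn : 2 ≤ n) (r : ℝ) (hr : 0 < r) (x y : EuclideanSpace ℝ (Fin n)) :
    dist x y = 2 * r ↔ ∃! z, dist x z = r ∧ dist y z = r := by
  constructor
  · intro h
    refine ⟨midpoint ℝ x y, ⟨?_, ?_⟩, ?_⟩
    · rw [dist_left_midpoint, h, Real.norm_two]; ring
    · rw [dist_right_midpoint, h, Real.norm_two]; ring
    · rintro w ⟨hxw, hyw⟩
      exact eq_midpoint_of_dist_eq_half (by rw [hxw, h]; ring)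
        (by rw [dist_comm, hyw, h]; ring)
  · rintro ⟨z, ⟨hxz, hyz⟩, huniq⟩
    have hle : dist x y ≤ 2 * r := by
      have := dist_triangle x z y
      rw [hxz, dist_comm z y, hyz] at this
      linarith
    by_contra hne
    have hlt : dist x y < 2 * r := lt_of_le_of_ne hle hne
    have hd0 : (0:ℝ) ≤ dist x y := dist_nonneg
    obtain ⟨u, hu1, hvu⟩ := aux_exists_unit_orth hn (y - x)
    set t : ℝ := Real.sqrt (r ^ 2 - (dist x y / 2) ^ 2) with ht
    have htpos : 0 < t := Real.sqrt_pos.mpr (by nlinarith)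
    have ht2 : t ^ 2 = r ^ 2 - (dist x y / 2) ^ 2 := Real.sq_sqrt (by nlinarith)
    have hnv : ‖y - x‖ = dist x y := by rw [dist_comm, dist_eq_norm]
    have h1 := aux_key x y u hu1 hvu t r hr.le (by rw [hnv]; linarith)
    have h2 := aux_key x y u hu1 hvu (-t) r hr.le (by rw [hnv]; nlinarith)
    have e1 := huniq _ h1
    have e2 := huniq _ h2
    have hu0 : u ≠ 0 := by
      intro h0; rw [h0, norm_zero] at hu1; norm_num at hu1
    exact aux_ne x (((1:ℝ)/2) • (y - x)) u hu0 (by intro h; nlinarith : t ≠ -t)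
      (e1.trans e2.symm)

theorem stmt_15 (n : ℕ) (hn : 2 ≤ n)
    (f : EuclideanSpace ℝ (Fin n) → EuclideanSpace ℝ (Fin n))
    (hf : Function.Surjective f)
    (r : ℝ) (hr : 0 < r)
    (hpr : ∀ x y, dist x y = r ↔ dist (f x) (f y) = r) :
    ∀ x y, dist x y = 2 * r ↔ dist (f x) (f y) = 2 * r := by
  -- injectivity
  have hinj : Function.Injective f := by
    intro a b hab
    by_contra hne
    have hv : a - b ≠ 0 := sub_ne_zero.mpr hne
    set u : EuclideanSpace ℝ (Fin n) := ‖a - b‖⁻¹ • (a - b) with hu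
    have hu1 : ‖u‖ = 1 := norm_smul_inv_norm hv
    set z := a + r • u with hz
    have haz : dist a z = r := by
      rw [dist_eq_norm, hz]
      have : a - (a + r • u) = (-r) • u := by module
      rw [this, norm_smul, hu1]
      simp [abs_of_pos hr]
    have hbz : dist b z = ‖a - b‖ + r := by
      rw [dist_eq_norm, hz, hu]
      have hnv : ‖a - b‖ ≠ 0 := norm_ne_zero_iff.mpr hv
      have h3 : b - (a + r • (‖a - b‖⁻¹ • (a - b))) = (-(1 + r * ‖a - b‖⁻¹)) • (a - b) := by
        rw [neg_smul, add_smul, one_smul, mul_smul]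
        module
      rw [h3, norm_smul, Real.norm_eq_abs, abs_neg, abs_of_pos (by positivity)]
      field_simp
    have h1 : dist (f a) (f z) = r := (hpr a z).mp haz
    rw [hab] at h1
    have h2 : dist b z = r := (hpr b z).mpr h1
    rw [hbz] at h2
    have : ‖a - b‖ > 0 := norm_pos_iff.mpr hv
    linarith
  -- transfer of the ∃! characterization
  intro x y
  rw [aux_char hn r hr x y, aux_char hn r hr (f x) (f y)]
  constructor
  · rintro ⟨z, ⟨hxz, hyz⟩, huniq⟩
    refine ⟨f z, ⟨(hpr x z).mp hxz, (hpr y z).mp hyz⟩, ?_⟩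
    rintro w ⟨hw1, hw2⟩
    obtain ⟨z', rfl⟩ := hf w
    have := huniq z' ⟨(hpr x z').mpr hw1, (hpr y z').mpr hw2⟩
    rw [this]
  · rintro ⟨w, ⟨hw1, hw2⟩, huniq⟩
    obtain ⟨z, rfl⟩ := hf w
    refine ⟨z, ⟨(hpr x z).mpr hw1, (hpr y z).mpr hw2⟩, ?_⟩
    rintro z' ⟨h1, h2⟩
    exact hinj (huniq (f z') ⟨(hpr x z').mp h1, (hpr y z').mp h2⟩)
end

section
/- Let n ≥ 2 and let f : E^n → E^n be a surjective function. If r > 0 is strongly preserved by f, then for every positive integer j, the distance j·r is strongly preserved by f. (This is the Euclidean-space instance of Lemma 'Many': since the convexity radius of Euclidean space is infinite, all positive integer multiples of r are strongly preserved.) -/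
open scoped RealInnerProductSpace
open Module AffineMap

namespace Stmt16Aux

variable {n : ℕ}

lemma exists_unit_perp (hn : 2 ≤ n) (w : EuclideanSpace ℝ (Fin n)) :
    ∃ v : EuclideanSpace ℝ (Fin n), ‖v‖ = 1 ∧ ⟪w, v⟫ = 0 := by
  have hd : finrank ℝ (EuclideanSpace ℝ (Fin n)) = n := finrank_euclideanSpace_fin
  have hne : ((ℝ ∙ w)ᗮ : Submodule ℝ (EuclideanSpace ℝ (Fin n))) ≠ ⊥ := by
    intro h
    have htop : (ℝ ∙ w : Submodule ℝ (EuclideanSpace ℝ (Fin n))) = ⊤ :=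
      Submodule.orthogonal_eq_bot_iff.1 h
    have h1 : finrank ℝ (ℝ ∙ w : Submodule ℝ (EuclideanSpace ℝ (Fin n))) ≤ 1 := by
      rcases eq_or_ne w 0 with rfl | hw
      · rw [Submodule.span_zero_singleton]; simp
      · rw [finrank_span_singleton hw]
    rw [htop, finrank_top, hd] at h1
    omega
  obtain ⟨v', hv'mem, hv'ne⟩ := Submodule.exists_mem_ne_zero_of_ne_bot hne
  refine ⟨‖v'‖⁻¹ • v', ?_, ?_⟩
  · rw [norm_smul, norm_inv, norm_norm]
    field_simp [norm_ne_zero_iff.2 hv'ne]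
  · have h0 := (Submodule.mem_orthogonal _ v').1 hv'mem w (Submodule.mem_span_singleton_self w)
    rw [real_inner_smul_right, h0, mul_zero]
lemma dist_comp (x y v : EuclideanSpace ℝ (Fin n)) (hv : ‖v‖ = 1)
    (hperp : ⟪y - x, v⟫ = 0) (α b : ℝ) :
    dist (x + α • (y - x) + b • v) x = Real.sqrt (α^2 * dist x y^2 + b^2) ∧
    dist (x + α • (y - x) + b • v) y = Real.sqrt ((α-1)^2 * dist x y^2 + b^2) := by
  have hsq : ∀ c d : ℝ, ‖c • (y - x) + d • v‖^2 = c^2 * dist x y^2 + d^2 := by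
    intro c d
    rw [norm_add_sq_real, real_inner_smul_left, real_inner_smul_right, hperp,
      norm_smul, norm_smul, hv, dist_eq_norm', Real.norm_eq_abs, Real.norm_eq_abs]
    rw [mul_pow, mul_pow, sq_abs, sq_abs]
    ring
  constructor
  · have h1 : x + α • (y - x) + b • v - x = α • (y - x) + b • v := by abel
    rw [dist_eq_norm, h1, ← Real.sqrt_sq (norm_nonneg _), hsq]
  · have h2 : x + α • (y - x) + b • v - y = (α - 1) • (y - x) + b • v := by
      rw [sub_smul, one_smul]; abel
    rw [dist_eq_norm, h2, ← Real.sqrt_sq (norm_nonneg _), hsq]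
lemma boundary_mem {K r : ℝ} (hr : 0 < r) (hK : 0 < K) {x y : EuclideanSpace ℝ (Fin n)}
    (ht : dist x y = K + r ∨ dist x y = K - r) (htpos : 0 < dist x y) :
    dist x (x + (K / dist x y) • (y - x)) = K ∧
    dist (x + (K / dist x y) • (y - x)) y = r := by
  set t := dist x y with htt
  constructor
  · rw [dist_comm, dist_eq_norm]
    have h1 : x + (K / t) • (y - x) - x = (K / t) • (y - x) := by abel
    rw [h1, norm_smul, Real.norm_eq_abs, abs_of_pos (by positivity), ← dist_eq_norm', ← htt]
    field_simp
  · rw [dist_eq_norm]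
    have h2 : x + (K / t) • (y - x) - y = (K / t - 1) • (y - x) := by
      rw [sub_smul, one_smul]; abel
    rw [h2, norm_smul, Real.norm_eq_abs, ← dist_eq_norm', ← htt]
    have h3 : |K / t - 1| = |K - t| / t := by
      rw [← abs_of_pos htpos, ← abs_div, abs_of_pos htpos]
      congr 1
      field_simp
    rw [h3]
    rcases ht with h | h
    · rw [h]; rw [show K - (K + r) = -r by ring, abs_neg, abs_of_pos hr]
      field_simp
    · rw [h]; rw [show K - (K - r) = r by ring, abs_of_pos hr]
      have : K - r ≠ 0 := by rw [← h]; exact ne_of_gt htpos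
      field_simp
lemma boundary_unique {K r : ℝ} (hr : 0 < r) (hK : 0 < K) {x y z : EuclideanSpace ℝ (Fin n)}
    (ht : dist x y = K + r ∨ dist x y = K - r) (htpos : 0 < dist x y)
    (h1 : dist x z = K) (h2 : dist z y = r) :
    z = x + (K / dist x y) • (y - x) := by
  set t := dist x y with htt
  rcases ht with ht | ht
  · have hw : Wbtw ℝ x z y := by
      rw [← dist_add_dist_eq_iff, h1, h2, ← htt, ht]
    obtain ⟨s, hs, hz⟩ := hw
    have hdl : dist x z = s * t := by
      rw [dist_comm, ← hz, dist_lineMap_left, Real.norm_eq_abs, abs_of_nonneg hs.1, htt]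
    have hst : s * t = K := by rw [← hdl, h1]
    have hseq : s = K / t := by field_simp [ne_of_gt htpos] at hst ⊢; linarith
    rw [← hz, hseq, lineMap_apply_module]
    module
  · have hty : 0 < K - r → True := fun _ => trivial
    have hw : Wbtw ℝ x y z := by
      rw [← dist_add_dist_eq_iff, ← htt, ht, dist_comm y z, h2, h1]
      ring
    obtain ⟨s, hs, hy⟩ := hw
    have hdl : dist x y = s * K := by
      rw [dist_comm, ← hy, dist_lineMap_left, Real.norm_eq_abs, abs_of_nonneg hs.1, h1]
    have hst : s * K = t := by rw [← hdl]
    have hs0 : s ≠ 0 := by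
      intro h0; rw [h0, zero_mul] at hst; exact absurd hst.symm (ne_of_gt htpos)
    have hyx : y - x = s • (z - x) := by
      rw [← hy, lineMap_apply_module]
      module
    have hke : (K / t) * s = 1 := by
      field_simp [ne_of_gt htpos]
      linarith [hst]
    rw [hyx, smul_smul, hke, one_smul]
    abel
lemma two_witnesses (hn : 2 ≤ n) {r K : ℝ} (hr : 0 < r) (hK : r ≤ K)
    {x y : EuclideanSpace ℝ (Fin n)}
    (hlo : K - r < dist x y) (hhi : dist x y < K + r) (hxy : x ≠ y) :
    ∃ z w : EuclideanSpace ℝ (Fin n), z ≠ w ∧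
      (dist x z = K ∧ dist z y = r) ∧ (dist x w = K ∧ dist w y = r) := by
  obtain ⟨v, hv1, hv2⟩ := exists_unit_perp hn (y - x)
  set t := dist x y with htt
  have htpos : 0 < t := dist_pos.2 hxy
  have hKpos : 0 < K := lt_of_lt_of_le hr hK
  set α : ℝ := (t^2 + K^2 - r^2) / (2*t^2) with hα_def
  have ht2 : (t:ℝ)^2 ≠ 0 := by positivity
  have hα : α * (2*t^2) = t^2 + K^2 - r^2 := by
    rw [hα_def]; field_simp
  have factor : (K^2 - α^2*t^2) * (4*t^2) =
      ((r + t - K)*(r - t + K))*((t + K - r)*(t + K + r)) := by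
    linear_combination (-(2*t^2*α + (t^2+K^2-r^2))) * hα
  have hfpos : 0 < ((r + t - K)*(r - t + K))*((t + K - r)*(t + K + r)) := by
    have f1 : 0 < r + t - K := by linarith
    have f2 : 0 < r - t + K := by linarith
    have f3 : 0 < t + K - r := by linarith
    have f4 : 0 < t + K + r := by linarith
    positivity
  have hpos : 0 < K^2 - α^2*t^2 := by nlinarith [sq_nonneg t]
  set b : ℝ := Real.sqrt (K^2 - α^2*t^2) with hb_def
  have hbpos : 0 < b := Real.sqrt_pos.2 hpos
  have hb2 : b^2 = K^2 - α^2*t^2 := Real.sq_sqrt hpos.le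
  have e1 : α^2 * t^2 + b^2 = K^2 := by rw [hb2]; ring
  have e2 : (α-1)^2 * t^2 + b^2 = r^2 := by
    rw [hb2]; linear_combination -hα
  obtain ⟨hz1, hz2⟩ := dist_comp x y v hv1 hv2 α b
  obtain ⟨hw1, hw2⟩ := dist_comp x y v hv1 hv2 α (-b)
  refine ⟨x + α • (y - x) + b • v, x + α • (y - x) + (-b) • v, ?_, ⟨?_, ?_⟩, ⟨?_, ?_⟩⟩
  · intro h
    have h2 : b • v = (-b) • v := by
      have := h
      simpa [add_right_cancel_iff, add_left_cancel_iff] using this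
    have h3 : (b - (-b)) • v = 0 := by rw [sub_smul, h2, sub_self]
    rcases smul_eq_zero.1 h3 with h4 | h4
    · nlinarith
    · rw [h4, norm_zero] at hv1; norm_num at hv1
  · rw [dist_comm, hz1, ← htt, e1, Real.sqrt_sq hKpos.le]
  · rw [hz2, ← htt, e2, Real.sqrt_sq hr.le]
  · rw [dist_comm, hw1, ← htt,
      show α^2*t^2+(-b)^2 = K^2 from by linear_combination e1, Real.sqrt_sq hKpos.le]
  · rw [hw2, ← htt,
      show (α-1)^2*t^2+(-b)^2 = r^2 from by linear_combination e2, Real.sqrt_sq hr.le]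
lemma claimA (hn : 2 ≤ n) {r K : ℝ} (hr : 0 < r) (hK : r ≤ K)
    (x y : EuclideanSpace ℝ (Fin n)) :
    (∃! z : EuclideanSpace ℝ (Fin n), dist x z = K ∧ dist z y = r) ↔
      (dist x y = K + r ∨ (dist x y = K - r ∧ x ≠ y)) := by
  have hKpos : 0 < K := lt_of_lt_of_le hr hK
  constructor
  · rintro ⟨z, ⟨hz1, hz2⟩, huniq⟩
    by_contra hrhs
    push_neg at hrhs
    obtain ⟨hne1, hne2⟩ := hrhs
    rcases eq_or_ne x y with rfl | hxy
    · have hKr : K = r := by rw [← hz1, dist_comm x z, hz2]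
      obtain ⟨v, hv1, hv2⟩ := exists_unit_perp hn (x - x)
      obtain ⟨ha1, ha2⟩ := dist_comp x x v hv1 hv2 0 r
      obtain ⟨hb1, hb2⟩ := dist_comp x x v hv1 hv2 0 (-r)
      have hs1 : Real.sqrt ((0:ℝ)^2 * dist x x ^2 + r^2) = r := by
        simp [Real.sqrt_sq hr.le]
      have hs2 : Real.sqrt (((0:ℝ)-1)^2 * dist x x ^2 + r^2) = r := by
        simp [Real.sqrt_sq hr.le]
      have hs1' : Real.sqrt ((0:ℝ)^2 * dist x x ^2 + (-r)^2) = r := by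
        simp [Real.sqrt_sq hr.le]
      have hs2' : Real.sqrt (((0:ℝ)-1)^2 * dist x x ^2 + (-r)^2) = r := by
        simp [Real.sqrt_sq hr.le]
      rw [hs1] at ha1; rw [hs2] at ha2; rw [hs1'] at hb1; rw [hs2'] at hb2
      have e1 := huniq _ ⟨by rw [dist_comm, ha1, hKr], ha2⟩
      have e2 := huniq _ ⟨by rw [dist_comm, hb1, hKr], hb2⟩
      have h := e1.trans e2.symm
      have h2 : r • v = (-r) • v := by
        simpa [add_right_cancel_iff, add_left_cancel_iff] using h
      have h3 : (r - (-r)) • v = 0 := by rw [sub_smul, h2, sub_self]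
      rcases smul_eq_zero.1 h3 with h4 | h4
      · nlinarith
      · rw [h4, norm_zero] at hv1; norm_num at hv1
    · have htle : dist x y ≤ K + r := by
        calc dist x y ≤ dist x z + dist z y := dist_triangle x z y
        _ = K + r := by rw [hz1, hz2]
      have htge : K - r ≤ dist x y := by
        have := dist_triangle x y z
        rw [dist_comm y z, hz2] at this
        linarith [hz1 ▸ this]
      have hlt : dist x y < K + r := lt_of_le_of_ne htle hne1
      have hgt : K - r < dist x y := by
        rcases lt_or_eq_of_le htge with h | h
        · exact h
        · exact absurd (hne2 h.symm) hxy
      obtain ⟨z1, z2, hz12, hc1, hc2⟩ := two_witnesses hn hr hK hgt hlt hxy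
      exact hz12 ((huniq z1 hc1).trans (huniq z2 hc2).symm)
  · rintro (h | ⟨h, hxy⟩)
    · have htpos : 0 < dist x y := by rw [h]; positivity
      obtain ⟨m1, m2⟩ := boundary_mem hr hKpos (Or.inl h) htpos
      exact ⟨_, ⟨m1, m2⟩, fun w hw => boundary_unique hr hKpos (Or.inl h) htpos hw.1 hw.2⟩
    · have htpos : 0 < dist x y := dist_pos.2 hxy
      obtain ⟨m1, m2⟩ := boundary_mem hr hKpos (Or.inr h) htpos
      exact ⟨_, ⟨m1, m2⟩, fun w hw => boundary_unique hr hKpos (Or.inr h) htpos hw.1 hw.2⟩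
lemma f_inj (hn : 2 ≤ n) {r : ℝ} (hr : 0 < r)
    {f : EuclideanSpace ℝ (Fin n) → EuclideanSpace ℝ (Fin n)}
    (hpr : ∀ x y, dist x y = r ↔ dist (f x) (f y) = r) : Function.Injective f := by
  intro x y hfxy
  by_contra hne
  obtain ⟨v, hv1, hv2⟩ := exists_unit_perp hn (y - x)
  obtain ⟨hzx, hzy⟩ := dist_comp x y v hv1 hv2 0 r
  have htpos : 0 < dist x y := dist_pos.2 hne
  have h1 : dist (x + (0:ℝ) • (y - x) + r • v) x = r := by
    rw [hzx]; simp [Real.sqrt_sq hr.le]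
  have h2 : dist (x + (0:ℝ) • (y - x) + r • v) y ≠ r := by
    rw [hzy]
    have : r < Real.sqrt (((0:ℝ)-1)^2 * dist x y^2 + r^2) := by
      apply (Real.lt_sqrt hr.le).2
      nlinarith
    exact (ne_of_lt this).symm
  apply h2
  apply (hpr _ y).2
  rw [← hfxy]
  exact (hpr _ x).1 h1

end Stmt16Aux

open Stmt16Aux in
theorem stmt_16 (n : ℕ) (hn : 2 ≤ n)
    (f : EuclideanSpace ℝ (Fin n) → EuclideanSpace ℝ (Fin n))
    (hf : Function.Surjective f)
    (r : ℝ) (hr : 0 < r)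
    (hpr : ∀ x y, dist x y = r ↔ dist (f x) (f y) = r) :
    ∀ j : ℕ, 0 < j →
      ∀ x y, dist x y = j * r ↔ dist (f x) (f y) = j * r := by
  have hinj : Function.Injective f := f_inj hn hr hpr
  have main : ∀ k : ℕ,
      (∀ x y, dist x y = k * r ↔ dist (f x) (f y) = k * r) ∧
      (∀ x y, dist x y = (k + 1 : ℕ) * r ↔ dist (f x) (f y) = (k + 1 : ℕ) * r) := by
    intro k
    induction k with
    | zero =>
      constructor
      · intro x y
        simp only [Nat.cast_zero, zero_mul, dist_eq_zero]
        exact ⟨fun h => by rw [h], fun h => hinj h⟩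
      · intro x y
        simpa using hpr x y
    | succ k ih =>
      obtain ⟨ih0, ih1⟩ := ih
      refine ⟨ih1, ?_⟩
      intro x y
      set K : ℝ := ((k:ℝ) + 1) * r with hKdef
      have hK : r ≤ K := by nlinarith [Nat.cast_nonneg (α := ℝ) k]
      have hKr : ((k + 1 + 1 : ℕ) : ℝ) * r = K + r := by push_cast; ring
      have hKm : ((k : ℕ) : ℝ) * r = K - r := by push_cast; ring
      have hih1 : ∀ x y, dist x y = K ↔ dist (f x) (f y) = K := by
        intro a b
        have := ih1 a b
        rwa [show ((k + 1 : ℕ) : ℝ) * r = K by push_cast; ring] at this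
      -- transfer of the ∃! property
      have hU : ∀ a b : EuclideanSpace ℝ (Fin n),
          (∃! z, dist a z = K ∧ dist z b = r) ↔
          (∃! z, dist (f a) z = K ∧ dist z (f b) = r) := by
        intro a b
        constructor
        · rintro ⟨z, ⟨h1, h2⟩, hu⟩
          refine ⟨f z, ⟨(hih1 a z).1 h1, (hpr z b).1 h2⟩, ?_⟩
          rintro w ⟨hw1, hw2⟩
          obtain ⟨w', rfl⟩ := hf w
          exact congrArg f (hu w' ⟨(hih1 a w').2 hw1, (hpr w' b).2 hw2⟩)
        · rintro ⟨w, ⟨h1, h2⟩, hu⟩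
          obtain ⟨z, rfl⟩ := hf w
          refine ⟨z, ⟨(hih1 a z).2 h1, (hpr z b).2 h2⟩, ?_⟩
          rintro z' ⟨hz1, hz2⟩
          exact hinj (hu (f z') ⟨(hih1 a z').1 hz1, (hpr z' b).1 hz2⟩)
      rw [hKr]
      have hA1 := claimA hn hr hK x y
      have hA2 := claimA hn hr hK (f x) (f y)
      constructor
      · intro h
        have hU1 : ∃! z, dist x z = K ∧ dist z y = r := hA1.2 (Or.inl h)
        rcases hA2.1 ((hU x y).1 hU1) with h' | ⟨h', _⟩
        · exact h'
        · exfalso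
          have : dist x y = K - r := by
            rw [← hKm] at h' ⊢
            exact (ih0 x y).2 h'
          rw [h] at this; linarith
      · intro h
        have hU2 : ∃! z, dist (f x) z = K ∧ dist z (f y) = r := hA2.2 (Or.inl h)
        rcases hA1.1 ((hU x y).2 hU2) with h' | ⟨h', _⟩
        · exact h'
        · exfalso
          have : dist (f x) (f y) = K - r := by
            rw [← hKm] at h' ⊢
            exact (ih0 x y).1 h'
          rw [h] at this; linarith
  intro j hj x y
  exact (main j).1 x y
end

section
/- Let n ≥ 2 and let f : E^n → E^n be a surjective function strongly preserving some distance r > 0. Then for all x, y ∈ E^n, d(x, y) < r if and only if d(f(x), f(y)) < r. In particular, for each x ∈ E^n the image of the closed ball satisfies f(D(x, r)) = D(f(x), r), where D(z, r) = {w : d(z, w) ≤ r}. -/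
/-!
Two points are at distance at most `2r` iff some third point is at distance exactly `r` from
both (two spheres of radius `r` meet; this needs dimension at least 2), so a surjective map
strongly preserving `r` preserves `d ≤ 2r` in both directions. If `d(x, y) > r`, moving `x`
by `r` directly away from `y` gives `z` with `d(x, z) = r` and `d(y, z) > 2r`, whereas
`d(x, y) ≤ r` would force `d(y, z) ≤ 2r`; this upgrades the `2r`-equivalence to an
`r`-equivalence, and discarding the equality case `d = r` gives the strict one.
-/

open Module RealInnerProductSpace

section InnerProductSpace

variable {E : Type*} [NormedAddCommGroup E] [InnerProductSpace ℝ E]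

theorem exists_inner_eq_zero_norm_eq [FiniteDimensional ℝ E] (hE : 2 ≤ finrank ℝ E) (v : E)
    {c : ℝ} (hc : 0 ≤ c) : ∃ w : E, ⟪v, w⟫ = 0 ∧ ‖w‖ = c := by
  have : Nontrivial (ℝ ∙ v)ᗮ := by
    apply nontrivial_of_finrank_pos (R := ℝ)
    have := (ℝ ∙ v).finrank_add_finrank_orthogonal
    have := finrank_span_le_card (R := ℝ) ({v} : Set E)
    simp only [Set.toFinset_singleton, Finset.card_singleton] at this
    omega
  obtain ⟨w, hw⟩ := exists_norm_eq (ℝ ∙ v)ᗮ hc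
  exact ⟨w, Submodule.mem_orthogonal_singleton_iff_inner_right.mp w.2, hw⟩

theorem dist_midpoint_add_sq {x y w : E} (h : ⟪y - x, w⟫ = 0) :
    dist x (midpoint ℝ x y + w) ^ 2 = (dist x y / 2) ^ 2 + ‖w‖ ^ 2 := by
  have hxy : (2⁻¹ : ℝ) • (y - x) + w = midpoint ℝ x y + w - x := by
    rw [add_sub_right_comm, midpoint_sub_left, invOf_eq_inv]
  rw [dist_comm, dist_eq_norm, ← hxy, norm_add_sq_real, real_inner_smul_left, h, norm_smul,
    dist_eq_norm', Real.norm_of_nonneg (by norm_num)]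
  ring

theorem exists_dist_eq_dist_eq_of_dist_le_s17 [FiniteDimensional ℝ E] (hE : 2 ≤ finrank ℝ E)
    {x y : E} {r : ℝ} (h : dist x y ≤ 2 * r) : ∃ z, dist x z = r ∧ dist y z = r := by
  have hr : 0 ≤ r := by linarith [dist_nonneg (x := x) (y := y)]
  obtain ⟨w, hw, hwn⟩ := exists_inner_eq_zero_norm_eq hE (y - x)
    (Real.sqrt_nonneg (r ^ 2 - (dist x y / 2) ^ 2))
  have hw_sq : ‖w‖ ^ 2 = r ^ 2 - (dist x y / 2) ^ 2 := by
    rw [hwn, Real.sq_sqrt]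
    nlinarith [dist_nonneg (x := x) (y := y)]
  have hw' : ⟪x - y, w⟫ = 0 := by rw [← neg_sub, inner_neg_left, hw, neg_zero]
  refine ⟨midpoint ℝ x y + w, (sq_eq_sq₀ dist_nonneg hr).mp ?_, (sq_eq_sq₀ dist_nonneg hr).mp ?_⟩
  · rw [dist_midpoint_add_sq hw, hw_sq]
    ring
  · rw [midpoint_comm, dist_midpoint_add_sq hw', hw_sq, dist_comm]
    ring

end InnerProductSpace

theorem exists_dist_eq_two_mul_lt_dist {E : Type*} [NormedAddCommGroup E] [NormedSpace ℝ E]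
    {x y : E} {r : ℝ} (hr : 0 ≤ r) (h : r < dist x y) : ∃ z, dist x z = r ∧ 2 * r < dist y z := by
  have hd : 0 < dist x y := hr.trans_lt h
  refine ⟨x + (r / dist x y) • (x - y), ?_, ?_⟩
  · rw [dist_eq_norm, sub_add_cancel_left, norm_neg, norm_smul, ← dist_eq_norm,
      Real.norm_of_nonneg (by positivity), div_mul_cancel₀ _ hd.ne']
  · have : y - (x + (r / dist x y) • (x - y)) = -((1 + r / dist x y) • (x - y)) := by module
    rw [dist_eq_norm, this, norm_neg, norm_smul, ← dist_eq_norm,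
      Real.norm_of_nonneg (by positivity), add_mul, one_mul, div_mul_cancel₀ _ hd.ne']
    linarith

section PseudoMetricSpace

variable {α β : Type*} [PseudoMetricSpace α] [PseudoMetricSpace β] {f : α → β} {r : ℝ}

theorem dist_le_two_mul_iff_of_dist_eq_iff
    (hα : ∀ x y : α, dist x y ≤ 2 * r → ∃ z, dist x z = r ∧ dist y z = r)
    (hβ : ∀ x y : β, dist x y ≤ 2 * r → ∃ z, dist x z = r ∧ dist y z = r)
    (hf : Function.Surjective f) (hpr : ∀ x y, dist x y = r ↔ dist (f x) (f y) = r) (x y : α) :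
    dist x y ≤ 2 * r ↔ dist (f x) (f y) ≤ 2 * r := by
  constructor
  · intro h
    obtain ⟨z, hxz, hyz⟩ := hα x y h
    calc dist (f x) (f y) ≤ dist (f x) (f z) + dist (f y) (f z) := dist_triangle_right _ _ _
      _ = 2 * r := by rw [(hpr x z).mp hxz, (hpr y z).mp hyz, two_mul]
  · intro h
    obtain ⟨z', hxz, hyz⟩ := hβ _ _ h
    obtain ⟨z, rfl⟩ := hf z'
    calc dist x y ≤ dist x z + dist y z := dist_triangle_right _ _ _
      _ = 2 * r := by rw [(hpr x z).mpr hxz, (hpr y z).mpr hyz, two_mul]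

theorem dist_le_iff_of_dist_eq_iff
    (hα : ∀ x y : α, r < dist x y → ∃ z, dist x z = r ∧ 2 * r < dist y z)
    (hβ : ∀ x y : β, r < dist x y → ∃ z, dist x z = r ∧ 2 * r < dist y z)
    (hf : Function.Surjective f) (hpr : ∀ x y, dist x y = r ↔ dist (f x) (f y) = r)
    (h2r : ∀ x y, dist x y ≤ 2 * r ↔ dist (f x) (f y) ≤ 2 * r) (x y : α) :
    dist x y ≤ r ↔ dist (f x) (f y) ≤ r := by
  constructor
  · intro h
    by_contra! hlt
    obtain ⟨z', hxz, hyz⟩ := hβ _ _ hlt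
    obtain ⟨z, rfl⟩ := hf z'
    have : dist y z ≤ 2 * r := by
      linarith [dist_triangle_left y z x, (hpr x z).mpr hxz]
    exact hyz.not_ge ((h2r y z).mp this)
  · intro h
    by_contra! hlt
    obtain ⟨z, hxz, hyz⟩ := hα _ _ hlt
    have : dist (f y) (f z) ≤ 2 * r := by
      linarith [dist_triangle_left (f y) (f z) (f x), (hpr x z).mp hxz]
    exact hyz.not_ge ((h2r y z).mpr this)

end PseudoMetricSpace

theorem stmt_17 (n : ℕ) (hn : 2 ≤ n)
    (f : EuclideanSpace ℝ (Fin n) → EuclideanSpace ℝ (Fin n))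
    (hf : Function.Surjective f)
    (r : ℝ) (hr : 0 < r)
    (hpr : ∀ x y, dist x y = r ↔ dist (f x) (f y) = r) :
    (∀ x y, dist x y < r ↔ dist (f x) (f y) < r) ∧
    (∀ x, f '' {y | dist x y ≤ r} = {y | dist (f x) y ≤ r}) := by
  have hE : 2 ≤ finrank ℝ (EuclideanSpace ℝ (Fin n)) := by
    rwa [finrank_euclideanSpace_fin]
  have hmid (x y : EuclideanSpace ℝ (Fin n)) :=
    exists_dist_eq_dist_eq_of_dist_le_s17 hE (x := x) (y := y) (r := r)
  have hfar (x y : EuclideanSpace ℝ (Fin n)) :=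
    exists_dist_eq_two_mul_lt_dist (x := x) (y := y) hr.le
  have hle := dist_le_iff_of_dist_eq_iff hfar hfar hf hpr
    (dist_le_two_mul_iff_of_dist_eq_iff hmid hmid hf hpr)
  refine ⟨fun x y ↦ by simp only [lt_iff_le_and_ne, hle x y, ne_eq, hpr x y], fun x ↦ ?_⟩
  ext w
  obtain ⟨y, rfl⟩ := hf w
  refine ⟨?_, fun h ↦ ⟨y, (hle x y).mpr h, rfl⟩⟩
  rintro ⟨y', hy', hfy⟩
  exact hfy ▸ (hle x y').mp hy'
end

section
/- Let S be a subset of the positive reals (0, ∞) satisfying: (1) for all a, b ∈ S with a > b, the number a − ⌊a/b⌋·b belongs to S ∪ {0}; and (2) there exist a, b ∈ S with a/b irrational. Then 0 is a limit point of S, i.e. for every ε > 0 there exists s ∈ S with 0 < s < ε. -/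
/-!
Run the Euclidean algorithm inside `S`. If `b < a` lie in `S` and `a / b` is irrational, the
remainder `r = a - ⌊a / b⌋ * b` is nonzero, hence lies in `S`; it satisfies `r < b` and `2 * r < a`,
and `b / r` is again irrational. Two steps therefore turn a pair `(a, b)` into a pair `(r, r')` of the
same kind with `2 * r < a`, so `S` contains pairs, and hence elements, that are arbitrarily small.
-/

open Set

section Remainder

variable {k : Type*} [Field k] [LinearOrder k] [FloorRing k]

theorem sub_floor_div_mul_eq_mul_fract (a : k) {b : k} (hb : b ≠ 0) :
    a - ⌊a / b⌋ * b = b * Int.fract (a / b) := by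
  rw [Int.fract]
  field_simp

theorem two_mul_sub_floor_div_mul_lt [IsOrderedRing k] {a b : k} (hb : 0 < b) (hba : b ≤ a) :
    2 * (a - ⌊a / b⌋ * b) < a := by
  have hq : (1 : k) ≤ ⌊a / b⌋ := by
    exact_mod_cast Int.le_floor.mpr (by simpa using (one_le_div hb).mpr hba)
  have hle : a - ⌊a / b⌋ * b ≤ a - b := by nlinarith
  linarith [Int.sub_floor_div_mul_lt a hb]

end Remainder

theorem Irrational.div_symm {a b : ℝ} (h : Irrational (a / b)) : Irrational (b / a) := by
  simpa only [inv_div] using h.inv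

theorem sub_floor_div_mul_pos_of_irrational {a b : ℝ} (hb : 0 < b) (h : Irrational (a / b)) :
    0 < a - ⌊a / b⌋ * b := by
  have hfract : Int.fract (a / b) ≠ 0 := (h.sub_intCast ⌊a / b⌋).ne_zero
  rw [sub_floor_div_mul_eq_mul_fract a hb.ne']
  exact mul_pos hb ((Int.fract_nonneg _).lt_of_ne' hfract)

theorem Irrational.div_sub_floor_div_mul {a b : ℝ} (hb : b ≠ 0) (h : Irrational (a / b)) :
    Irrational (b / (a - ⌊a / b⌋ * b)) := by
  rw [sub_floor_div_mul_eq_mul_fract a hb, div_mul_cancel_left₀ hb]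
  exact (h.sub_intCast ⌊a / b⌋).inv

structure IsIrrationalPair (S : Set ℝ) (a b : ℝ) : Prop where
  left_mem : a ∈ S
  right_mem : b ∈ S
  lt : b < a
  irrational : Irrational (a / b)

namespace IsIrrationalPair

variable {S : Set ℝ} (hS : S ⊆ Ioi 0)
include hS

theorem exists_of_mem_of_irrational {a b : ℝ} (ha : a ∈ S) (hb : b ∈ S) (h : Irrational (a / b)) :
    ∃ a' b', IsIrrationalPair S a' b' := by
  have hne : a ≠ b := by
    rintro rfl
    exact h.ne_one (div_self (hS ha).ne')
  rcases hne.lt_or_gt with hab | hba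
  · exact ⟨b, a, hb, ha, hab, h.div_symm⟩
  · exact ⟨a, b, ha, hb, hba, h⟩

variable (hmod : ∀ a ∈ S, ∀ b ∈ S, b < a → a - ⌊a / b⌋ * b ∈ S ∪ {0})
include hmod

theorem euclid_step {a b : ℝ} (h : IsIrrationalPair S a b) :
    ∃ r, IsIrrationalPair S b r ∧ 2 * r < a := by
  have hb : 0 < b := hS h.right_mem
  have hr : 0 < a - ⌊a / b⌋ * b := sub_floor_div_mul_pos_of_irrational hb h.irrational
  have hrS : a - ⌊a / b⌋ * b ∈ S := by
    rcases hmod a h.left_mem b h.right_mem h.lt with hrS | hr0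
    · exact hrS
    · exact absurd (mem_singleton_iff.mp hr0) hr.ne'
  exact ⟨_, ⟨h.right_mem, hrS, Int.sub_floor_div_mul_lt a hb,
    h.irrational.div_sub_floor_div_mul hb.ne'⟩, two_mul_sub_floor_div_mul_lt hb h.lt.le⟩

theorem exists_two_pow_mul_le {a b : ℝ} (h : IsIrrationalPair S a b) (n : ℕ) :
    ∃ a' b', IsIrrationalPair S a' b' ∧ 2 ^ n * a' ≤ a := by
  induction n with
  | zero => exact ⟨a, b, h, by simp⟩
  | succ n ih =>
    obtain ⟨a₁, b₁, h₁, hle⟩ := ih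
    obtain ⟨r, hr, hlt⟩ := euclid_step hS hmod h₁
    obtain ⟨r', hr', -⟩ := euclid_step hS hmod hr
    exact ⟨r, r', hr', by rw [pow_succ]; nlinarith [pow_pos (two_pos : (0 : ℝ) < 2) n]⟩

end IsIrrationalPair

theorem stmt_19 (S : Set ℝ) (hS : S ⊆ Set.Ioi 0)
    (h1 : ∀ a ∈ S, ∀ b ∈ S, b < a → a - ⌊a / b⌋ * b ∈ S ∪ {0})
    (h2 : ∃ a ∈ S, ∃ b ∈ S, Irrational (a / b)) :
    ∀ ε > 0, ∃ s ∈ S, 0 < s ∧ s < ε := by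
  intro ε hε
  obtain ⟨a₀, ha₀, b₀, hb₀, hirr⟩ := h2
  obtain ⟨a, b, hab⟩ := IsIrrationalPair.exists_of_mem_of_irrational hS ha₀ hb₀ hirr
  obtain ⟨n, hn⟩ := pow_unbounded_of_one_lt (a / ε) one_lt_two
  obtain ⟨a', b', h', hle⟩ := hab.exists_two_pow_mul_le hS h1 n
  have ha' : a' < ε := by
    rw [div_lt_iff₀ hε] at hn
    exact lt_of_mul_lt_mul_left (hle.trans_lt hn) (by positivity)
  exact ⟨b', h'.right_mem, hS h'.right_mem, h'.lt.trans ha'⟩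
end
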